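/- arXiv:hep-th/0503106 — 2 statements merged into one kernel-verified Lean document; each statement's English description precedes it below -/
import Mathlib

section
/- (Proposition 1 of the paper.) Let 𝕆 denote the octonions and for an octonion a let l_a denote left multiplication by a. Let a₁, …, a_n be unitary purely imaginary octonions and g = l_{a₁} ∘ ⋯ ∘ l_{a_n}. If g(1) = 1, then g is an algebra automorphism of the octonions, i.e. g(x·y) = g(x)·g(y) for all octonions x, y (so g belongs to G₂ = Aut(𝕆)). -/
noncomputable section

/-- The octonions, realized as pairs of quaternions. -/
abbrev Octonion := Quaternion ℝ × Quaternion ℝ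

/-- Octonion multiplication: (α₁,α₂)·(β₁,β₂) = (α₁β₁ − β̄₂α₂, β₂α₁ + α₂β̄₁). -/
def omul (a b : Octonion) : Octonion :=
  (a.1 * b.1 - star b.2 * a.2, b.2 * a.1 + a.2 * star b.1)

/-- Octonion conjugation: (α₁,α₂)* = (ᾱ₁, −α₂). -/
def oconj (a : Octonion) : Octonion := (star a.1, -a.2)

/-- The unit octonion 1 = (1,0). -/
def oone : Octonion := ((1 : Quaternion ℝ), (0 : Quaternion ℝ))

/-- An octonion is purely imaginary if a + a* = 0. -/
def IsPurelyImaginary (a : Octonion) : Prop := a + oconj a = 0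

/-- The squared Euclidean norm ‖(α₁,α₂)‖² = ‖α₁‖² + ‖α₂‖². -/
def onormSq (a : Octonion) : ℝ := ‖a.1‖ ^ 2 + ‖a.2‖ ^ 2

/-- The Euclidean norm of an octonion. -/
def onorm (a : Octonion) : ℝ := Real.sqrt (onormSq a)

/-- An octonion is unitary if its Euclidean norm equals 1. -/
def IsUnitary (a : Octonion) : Prop := onorm a = 1

/-!
A unit imaginary octonion `a` satisfies `a² = -1`, so the Moufang identity
`a(x(ay)) = ((ax)a)y`, applied to `x` and `ay`, becomes `a(xy) = ((ax)(-a))(ay)`.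
By induction on the word, `g(xy) = T(x) g(y)`, where `T` is the composite of the maps
`x ↦ (ax)(-a)`. Taking `y = 1` and using `g(1) = 1` gives `T = g`.
-/

lemma omul_neg_left (a b : Octonion) : omul (-a) b = -omul a b := by
  simp only [omul, Prod.fst_neg, Prod.snd_neg, neg_mul, mul_neg, Prod.neg_mk, Prod.mk.injEq]
  constructor <;> abel

lemma omul_neg_right (a b : Octonion) : omul a (-b) = -omul a b := by
  simp only [omul, Prod.fst_neg, Prod.snd_neg, star_neg, neg_mul, mul_neg, Prod.neg_mk,
    Prod.mk.injEq]
  constructor <;> abel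

lemma omul_oone (x : Octonion) : omul x oone = x := by
  simp [omul, oone]

lemma oone_omul (x : Octonion) : omul oone x = x := by
  simp [omul, oone]

open Quaternion in
lemma omul_moufang (a x y : Octonion) :
    omul a (omul x (omul a y)) = omul (omul (omul a x) a) y := by
  simp only [omul, Prod.mk.injEq]
  constructor <;> ext <;>
    simp only [re_mul, imI_mul, imJ_mul, imK_mul, re_sub, imI_sub, imJ_sub, imK_sub,
      re_add, imI_add, imJ_add, imK_add, re_star, imI_star, imJ_star, imK_star] <;>
    ring

lemma omul_omul_self_left (a y : Octonion) : omul a (omul a y) = omul (omul a a) y := by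
  simpa only [oone_omul, omul_oone] using omul_moufang a oone y

open Quaternion in
lemma omul_self_eq_neg_oone {a : Octonion} (hU : IsUnitary a) (hI : IsPurelyImaginary a) :
    omul a a = -oone := by
  have hstar : star a.1 = -a.1 := eq_neg_of_add_eq_zero_right (congrArg Prod.fst hI)
  have hnorm : normSq a.1 + normSq a.2 = 1 := by
    simpa [IsUnitary, onorm, onormSq, normSq_eq_norm_mul_self, ← sq] using hU
  have hsq : a.1 * a.1 = -((normSq a.1 : ℝ) : Quaternion ℝ) := by
    rw [← star_mul_self, hstar, neg_mul, neg_neg]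
  ext : 1
  · simp only [omul, oone, hsq, star_mul_self, Prod.fst_neg]
    rw [sub_eq_add_neg, ← neg_add, ← coe_add, hnorm, coe_one]
  · simp [omul, oone, hstar]

lemma omul_omul_of_omul_self_eq_neg_oone {a : Octonion} (ha : omul a a = -oone)
    (x y : Octonion) : omul a (omul x y) = omul (omul (omul a x) (-a)) (omul a y) := by
  have h := omul_moufang a x (omul a y)
  rw [omul_omul_self_left, ha, omul_neg_left, oone_omul, omul_neg_right, omul_neg_right] at h
  rw [omul_neg_right, omul_neg_left, ← h, neg_neg]

lemma foldr_omul_omul {l : List Octonion} (hl : ∀ a ∈ l, omul a a = -oone) (x y : Octonion) :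
    l.foldr omul (omul x y) =
      omul (l.foldr (fun a z => omul (omul a z) (-a)) x) (l.foldr omul y) := by
  induction l with
  | nil => rfl
  | cons a l ih =>
    rw [List.foldr_cons, List.foldr_cons, List.foldr_cons,
      ih fun b hb => hl b (List.mem_cons_of_mem a hb),
      omul_omul_of_omul_self_eq_neg_oone (hl a List.mem_cons_self)]

/-- Proposition 1: if g = l_{a₁} ∘ ⋯ ∘ l_{a_n} with the aᵢ unitary purely
imaginary octonions and g(1) = 1, then g is an automorphism of the octonion
algebra, i.e. g ∈ G₂. -/
theorem proposition_one (l : List Octonion)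
    (h : ∀ a ∈ l, IsUnitary a ∧ IsPurelyImaginary a)
    (hg : l.foldr omul oone = oone) (x y : Octonion) :
    l.foldr omul (omul x y) = omul (l.foldr omul x) (l.foldr omul y) := by
  have hl : ∀ a ∈ l, omul a a = -oone := fun a ha => omul_self_eq_neg_oone (h a ha).1 (h a ha).2
  have hT : ∀ z, l.foldr (fun a w => omul (omul a w) (-a)) z = l.foldr omul z := fun z => by
    simpa only [omul_oone, hg] using (foldr_omul_omul hl z oone).symm
  rw [foldr_omul_omul hl, hT]
end
end

section
/- Let 𝕆 denote the octonions and let a, b, c be unitary purely imaginary octonions with (c·b)·a purely imaginary. Then the element g_{abc} = −l_{(c·b)·a} ∘ l_a ∘ l_b ∘ l_c satisfies g_{abc}(1) = 1, i.e. ((c·b)·a)·(a·(b·c)) = −1. -/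
noncomputable section

/-!
Purity of `a`, `b`, `c` makes conjugation send `(c·b)·a` to `-(a·(b·c))`, so purity of `(c·b)·a`
forces `a·(b·c) = (c·b)·a`. The product in question is therefore `x·x` for the purely imaginary
`x = (c·b)·a`, which is `-‖x‖² = -1` because the octonion norm is multiplicative.
-/

open Quaternion

lemma sq_norm_eq_normSq (q : Quaternion ℝ) : ‖q‖ ^ 2 = normSq q := by
  rw [sq, normSq_eq_norm_mul_self]

lemma onormSq_eq_one_of_isUnitary {x : Octonion} (hx : IsUnitary x) : onormSq x = 1 := by
  rwa [IsUnitary, onorm, Real.sqrt_eq_one] at hx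

-- Degen's eight-square identity, checked on the real components.
lemma onormSq_omul (x y : Octonion) : onormSq (omul x y) = onormSq x * onormSq y := by
  simp only [onormSq, omul, sq_norm_eq_normSq, normSq_def', re_mul, imI_mul, imJ_mul, imK_mul,
    re_sub, imI_sub, imJ_sub, imK_sub, re_add, imI_add, imJ_add, imK_add, re_star, imI_star,
    imJ_star, imK_star]
  ring

lemma oconj_omul (x y : Octonion) : oconj (omul x y) = omul (oconj y) (oconj x) := by
  ext <;> simp [oconj, omul]

lemma omul_neg (x y : Octonion) : omul x (-y) = -omul x y := by
  refine Prod.ext ?_ ?_ <;>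
    simp only [omul, Prod.fst_neg, Prod.snd_neg, star_neg, mul_neg, neg_mul] <;> abel

lemma neg_omul (x y : Octonion) : omul (-x) y = -omul x y := by
  refine Prod.ext ?_ ?_ <;> simp only [omul, Prod.fst_neg, Prod.snd_neg, mul_neg, neg_mul] <;> abel

lemma omul_oconj_self (x : Octonion) : omul x (oconj x) = onormSq x • oone := by
  refine Prod.ext ?_ ?_
  · simp [omul, oconj, oone, onormSq, sq_norm_eq_normSq, self_mul_star, star_mul_self,
      Algebra.smul_def]
  · simp [omul, oconj, oone]

lemma IsPurelyImaginary.oconj_eq {x : Octonion} (hx : IsPurelyImaginary x) : oconj x = -x :=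
  eq_neg_of_add_eq_zero_right hx

lemma IsPurelyImaginary.omul_self {x : Octonion} (hx : IsPurelyImaginary x) :
    omul x x = -(onormSq x • oone) := by
  rw [← omul_oconj_self, hx.oconj_eq, omul_neg, neg_neg]

lemma oconj_omul_omul_of_isPurelyImaginary {a b c : Octonion} (ha : IsPurelyImaginary a)
    (hb : IsPurelyImaginary b) (hc : IsPurelyImaginary c) :
    oconj (omul (omul c b) a) = -omul a (omul b c) := by
  rw [oconj_omul, oconj_omul, ha.oconj_eq, hb.oconj_eq, hc.oconj_eq, omul_neg, neg_omul,
    neg_omul, neg_neg]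

/-- For unitary purely imaginary octonions a, b, c with (c·b)·a purely
imaginary, the element g_{abc} = −l_{(c·b)·a} ∘ l_a ∘ l_b ∘ l_c fixes 1,
i.e. ((c·b)·a)·(a·(b·c)) = −1. -/
theorem g_abc_fixes_one (a b c : Octonion)
    (ha : IsUnitary a) (ha' : IsPurelyImaginary a)
    (hb : IsUnitary b) (hb' : IsPurelyImaginary b)
    (hc : IsUnitary c) (hc' : IsPurelyImaginary c)
    (hcba : IsPurelyImaginary (omul (omul c b) a)) :
    omul (omul (omul c b) a) (omul a (omul b c)) = -oone := by
  have hswap : omul a (omul b c) = omul (omul c b) a := by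
    rw [← neg_neg (omul a (omul b c)), ← oconj_omul_omul_of_isPurelyImaginary ha' hb' hc',
      hcba.oconj_eq, neg_neg]
  have hnorm : onormSq (omul (omul c b) a) = 1 := by
    rw [onormSq_omul, onormSq_omul, onormSq_eq_one_of_isUnitary ha,
      onormSq_eq_one_of_isUnitary hb, onormSq_eq_one_of_isUnitary hc, one_mul, one_mul]
  rw [hswap, hcba.omul_self, hnorm, one_smul]
end
end
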